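/- Let V be a complete non-archimedean normed F-vector space and B a countably dimensional F-algebra with F-basis {t_n}. Then every element f of the completion of B⊗V (with respect to the infimum norm) is represented by a unique sequence (v_n) in V converging to zero such that f = Σ_n t_n⊗v_n, and ‖f‖ = max_n |v_n|. -/

import Mathlib

/-!
Expanding in the basis `t` identifies `B ⊗[F] V` with the finitely supported sequences in `V`,
and the infimum norm becomes the sup norm of the coordinates: if `x = ∑ bᵢ ⊗ wᵢ`, each
coordinate of `x` is a combination `∑ cᵢ • wᵢ` with scalars `cᵢ`, of norm at most `max ‖wᵢ‖`
by the ultrametric inequality and `‖c • w‖ = ‖w‖`; the expansion in `t` itself attains this bound.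
So the coordinates of elements of `B ⊗[F] V` approximating `f` converge uniformly; their limit is
a null sequence whose series sums to `f`, and uniqueness and the norm formula pass to the limit
from finite sums.
-/

open TensorProduct Filter Topology

lemma Finsupp.bddAbove_range_norm {ι V : Type*} [NormedAddCommGroup V] (a : ι →₀ V) :
    BddAbove (Set.range fun i => ‖a i‖) := by
  simpa only [Set.range_comp'] using (a.finite_range.image norm).bddAbove

lemma Finsupp.sum_single_apply_eq_ite {ι V : Type*} [AddCommMonoid V] [DecidableEq ι]
    (s : Finset ι) (v : ι → V) (i : ι) :
    (∑ n ∈ s, Finsupp.single n (v n)) i = if i ∈ s then v i else 0 := by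
  simp only [Finsupp.finsetSum_apply, Finsupp.single_apply, Finset.sum_ite_eq']

section SupNormDenseEmbedding

variable {ι V W : Type*} [NormedAddCommGroup V] [NormedAddCommGroup W]
  {g : (ι →₀ V) →+ W}

lemma norm_apply_le_of_norm_eq_iSup (hg : ∀ a, ‖g a‖ = ⨆ i, ‖a i‖) (a : ι →₀ V) (i : ι) :
    ‖a i‖ ≤ ‖g a‖ :=
  hg a ▸ le_ciSup a.bddAbove_range_norm i

lemma norm_sum_single_sub_le (hg : ∀ a, ‖g a‖ = ⨆ i, ‖a i‖) {v : ι → V} {a : ι →₀ V}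
    {s : Finset ι} (hs : a.support ⊆ s) {δ : ℝ} (hδ : 0 ≤ δ) (hva : ∀ i, ‖v i - a i‖ ≤ δ) :
    ‖∑ n ∈ s, g (Finsupp.single n (v n)) - g a‖ ≤ δ := by
  classical
  rw [← map_sum, ← map_sub, hg]
  refine Real.iSup_le (fun i => ?_) hδ
  rw [Finsupp.sub_apply, Finsupp.sum_single_apply_eq_ite]
  split_ifs with hi
  · exact hva i
  · rwa [Finsupp.notMem_support_iff.mp (mt (@hs i) hi), sub_zero, norm_zero]

lemma norm_le_of_hasSum_single (hg : ∀ a, ‖g a‖ = ⨆ i, ‖a i‖) {v : ι → V} {f : W}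
    (hf : HasSum (fun n => g (Finsupp.single n (v n))) f) (i : ι) :
    ‖v i‖ ≤ ‖f‖ := by
  classical
  refine ge_of_tendsto hf.norm ((eventually_ge_atTop {i}).mono fun s hs => ?_)
  rw [← map_sum]
  simpa [Finsupp.sum_single_apply_eq_ite, Finset.singleton_subset_iff.mp hs]
    using norm_apply_le_of_norm_eq_iSup hg (∑ n ∈ s, Finsupp.single n (v n)) i

lemma norm_le_iSup_of_hasSum_single (hg : ∀ a, ‖g a‖ = ⨆ i, ‖a i‖) {v : ι → V} {f : W}
    (hv : BddAbove (Set.range fun i => ‖v i‖))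
    (hf : HasSum (fun n => g (Finsupp.single n (v n))) f) : ‖f‖ ≤ ⨆ i, ‖v i‖ := by
  classical
  refine le_of_tendsto' hf.norm fun s => ?_
  rw [← map_sum, hg]
  refine Real.iSup_le (fun i => ?_) (Real.iSup_nonneg fun i => norm_nonneg _)
  rw [Finsupp.sum_single_apply_eq_ite]
  split_ifs
  · exact le_ciSup hv i
  · rw [norm_zero]
    exact Real.iSup_nonneg fun i => norm_nonneg _

lemma norm_eq_iSup_of_hasSum_single (hg : ∀ a, ‖g a‖ = ⨆ i, ‖a i‖) {v : ι → V} {f : W}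
    (hv : Tendsto (fun i => ‖v i‖) cofinite (𝓝 0))
    (hf : HasSum (fun n => g (Finsupp.single n (v n))) f) : ‖f‖ = ⨆ i, ‖v i‖ :=
  le_antisymm (norm_le_iSup_of_hasSum_single hg hv.bddAbove_range_of_cofinite hf)
    (Real.iSup_le (norm_le_of_hasSum_single hg hf) (norm_nonneg f))

lemma eq_of_hasSum_single (hg : ∀ a, ‖g a‖ = ⨆ i, ‖a i‖) {v v' : ι → V} {f : W}
    (hf : HasSum (fun n => g (Finsupp.single n (v n))) f)
    (hf' : HasSum (fun n => g (Finsupp.single n (v' n))) f) : v = v' := by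
  have h0 : HasSum (fun n => g (Finsupp.single n ((v - v') n))) 0 := by
    simpa only [Pi.sub_apply, Finsupp.single_sub, map_sub, sub_self] using hf.sub hf'
  funext i
  simpa [sub_eq_zero] using norm_le_of_hasSum_single hg h0 i

lemma exists_forall_approx_of_denseRange [CompleteSpace V] (hg : ∀ a, ‖g a‖ = ⨆ i, ‖a i‖)
    (hdense : DenseRange g) (f : W) :
    ∃ v : ι → V, ∀ ε > 0, ∃ a : ι →₀ V, (∀ i, ‖v i - a i‖ < ε) ∧ ‖g a - f‖ < ε := by
  obtain ⟨y, hy, hyf⟩ := mem_closure_iff_seq_limit.mp (hdense f)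
  choose a ha using hy
  have hga : Tendsto (fun k => g (a k)) atTop (𝓝 f) := by simpa only [ha] using hyf
  have hcauchy : UniformCauchySeqOn (fun k i => a k i) atTop Set.univ := by
    refine Metric.uniformCauchySeqOn_iff.mpr fun ε hε => ?_
    obtain ⟨N, hN⟩ := Metric.cauchySeq_iff.mp hga.cauchySeq ε hε
    refine ⟨N, fun m hm n hn i _ => ?_⟩
    rw [dist_eq_norm, ← Finsupp.sub_apply]
    refine (norm_apply_le_of_norm_eq_iSup hg _ i).trans_lt ?_
    simpa only [map_sub, dist_eq_norm] using hN m hm n hn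
  choose v hv using fun i => cauchySeq_tendsto_of_complete (hcauchy.cauchySeq (Set.mem_univ i))
  have hunif : TendstoUniformly (fun k i => a k i) v atTop :=
    tendstoUniformlyOn_univ.mp (hcauchy.tendstoUniformlyOn_of_tendsto fun i _ => hv i)
  refine ⟨v, fun ε hε => ?_⟩
  obtain ⟨k, hvk, hfk⟩ :=
    ((Metric.tendstoUniformly_iff.mp hunif ε hε).and (Metric.tendsto_nhds.mp hga ε hε)).exists
  exact ⟨a k, fun i => dist_eq_norm (v i) (a k i) ▸ hvk i, dist_eq_norm (g (a k)) f ▸ hfk⟩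

lemma exists_hasSum_single_of_denseRange [CompleteSpace V] (hg : ∀ a, ‖g a‖ = ⨆ i, ‖a i‖)
    (hdense : DenseRange g) (f : W) :
    ∃ v : ι → V, Tendsto (fun i => ‖v i‖) cofinite (𝓝 0) ∧
      HasSum (fun n => g (Finsupp.single n (v n))) f := by
  obtain ⟨v, hv⟩ := exists_forall_approx_of_denseRange hg hdense f
  refine ⟨v, Metric.tendsto_nhds.mpr fun ε hε => ?_, Metric.tendsto_nhds.mpr fun ε hε => ?_⟩
  · obtain ⟨a, hva, -⟩ := hv ε hε
    refine eventually_cofinite.mpr (a.support.finite_toSet.subset fun i hi => ?_)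
    by_contra hia
    have hai : a i = 0 := Finsupp.notMem_support_iff.mp hia
    exact hi (by simpa [hai] using hva i)
  · obtain ⟨a, hva, hfa⟩ := hv (ε / 2) (half_pos hε)
    filter_upwards [eventually_ge_atTop a.support] with s hs
    calc dist (∑ n ∈ s, g (Finsupp.single n (v n))) f
        ≤ ‖∑ n ∈ s, g (Finsupp.single n (v n)) - g a‖ + ‖g a - f‖ := by
          rw [dist_eq_norm]; exact norm_sub_le_norm_sub_add_norm_sub _ _ _
      _ < ε / 2 + ε / 2 :=
        add_lt_add_of_le_of_lt
          (norm_sum_single_sub_le hg hs (half_pos hε).le fun i => (hva i).le) hfa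
      _ = ε := add_halves ε

end SupNormDenseEmbedding

section InfNorm

variable (F : Type*) {V B ι : Type*} [Field F] [NormedAddCommGroup V] [Module F V]
  [AddCommGroup B] [Module F B]

noncomputable def TensorProduct.infNorm (x : B ⊗[F] V) : ℝ :=
  sInf { r : ℝ | ∃ (n : ℕ) (b : Fin n → B) (w : Fin n → V),
    x = ∑ i, b i ⊗ₜ[F] w i ∧ r = ⨆ i, ‖w i‖ }

variable {F} [DecidableEq ι] (t : Module.Basis ι F B)

lemma norm_equivFinsuppOfBasisLeft_sum_tmul_le (hna : IsNonarchimedean (fun v : V => ‖v‖))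
    (hsmul : ∀ (c : F) (v : V), c ≠ 0 → ‖c • v‖ = ‖v‖) {n : ℕ} (b : Fin n → B) (w : Fin n → V)
    (i : ι) : ‖equivFinsuppOfBasisLeft t (∑ k, b k ⊗ₜ[F] w k) i‖ ≤ ⨆ k, ‖w k‖ := by
  have := IsUltrametricDist.isUltrametricDist_of_isNonarchimedean_norm hna
  have hw : 0 ≤ ⨆ k, ‖w k‖ := Real.iSup_nonneg fun k => norm_nonneg _
  simp only [map_sum, Finsupp.finsetSum_apply, equivFinsuppOfBasisLeft_apply_tmul_apply]
  refine IsUltrametricDist.norm_sum_le_of_forall_le_of_nonneg hw fun k _ => ?_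
  by_cases hc : t.repr (b k) i = 0
  · rwa [hc, zero_smul, norm_zero]
  · rw [hsmul _ _ hc]
    exact le_ciSup (Set.finite_range fun k => ‖w k‖).bddAbove k

lemma exists_sum_tmul_iSup_le (x : B ⊗[F] V) :
    ∃ (n : ℕ) (b : Fin n → B) (w : Fin n → V),
      x = ∑ k, b k ⊗ₜ[F] w k ∧ ⨆ k, ‖w k‖ ≤ ⨆ i, ‖equivFinsuppOfBasisLeft t x i‖ := by
  set a := equivFinsuppOfBasisLeft t x
  let e := a.support.equivFin.symm
  refine ⟨a.support.card, fun k => t (e k), fun k => a (e k), ?_, ?_⟩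
  · calc x = (equivFinsuppOfBasisLeft t).symm a := (LinearEquiv.symm_apply_apply _ x).symm
      _ = ∑ i ∈ a.support, t i ⊗ₜ[F] a i := equivFinsuppOfBasisLeft_symm_apply t a
      _ = ∑ k, t (e k) ⊗ₜ[F] a (e k) :=
        (Finset.sum_coe_sort _ _).symm.trans (e.sum_comp fun i : a.support => t i ⊗ₜ[F] a i).symm
  · exact Real.iSup_le (fun k => le_ciSup a.bddAbove_range_norm _)
      (Real.iSup_nonneg fun i => norm_nonneg _)

lemma infNorm_eq_iSup_norm_equivFinsuppOfBasisLeft (hna : IsNonarchimedean (fun v : V => ‖v‖))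
    (hsmul : ∀ (c : F) (v : V), c ≠ 0 → ‖c • v‖ = ‖v‖) (x : B ⊗[F] V) :
    infNorm F x = ⨆ i, ‖equivFinsuppOfBasisLeft t x i‖ := by
  obtain ⟨n, b, w, hx, hle⟩ := exists_sum_tmul_iSup_le t x
  have hbdd : BddBelow { r : ℝ | ∃ (n : ℕ) (b : Fin n → B) (w : Fin n → V),
      x = ∑ i, b i ⊗ₜ[F] w i ∧ r = ⨆ i, ‖w i‖ } := by
    refine ⟨0, ?_⟩
    rintro _ ⟨_, _, w, _, rfl⟩
    exact Real.iSup_nonneg fun i => norm_nonneg _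
  refine le_antisymm ((csInf_le hbdd ⟨n, b, w, hx, rfl⟩).trans hle) ?_
  refine le_csInf ⟨_, n, b, w, hx, rfl⟩ ?_
  rintro _ ⟨m, b, w, rfl, rfl⟩
  exact Real.iSup_le (norm_equivFinsuppOfBasisLeft_sum_tmul_le t hna hsmul b w)
    (Real.iSup_nonneg fun k => norm_nonneg _)

end InfNorm

theorem stmt1 (F : Type*) [Field F]
    (V : Type*) [NormedAddCommGroup V] [Module F V] [CompleteSpace V]
    (hna : IsNonarchimedean (fun v : V => ‖v‖))
    (hsmul : ∀ (c : F) (v : V), c ≠ 0 → ‖c • v‖ = ‖v‖)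
    (B : Type*) [CommRing B] [Algebra F B]
    (t : Module.Basis ℕ F B)
    (Nrm : B ⊗[F] V → ℝ)
    (hNrm : ∀ x : B ⊗[F] V,
      Nrm x = sInf { r : ℝ | ∃ (n : ℕ) (b : Fin n → B) (w : Fin n → V),
        x = ∑ i, b i ⊗ₜ[F] w i ∧ r = ⨆ i, ‖w i‖ })
    (W : Type*) [NormedAddCommGroup W] [Module F W]
    (j : B ⊗[F] V →ₗ[F] W) (hj : ∀ x, ‖j x‖ = Nrm x) (hdense : DenseRange j)
    (f : W) :
    (∃! v : ℕ → V,
        Tendsto (fun n => ‖v n‖) atTop (nhds 0) ∧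
        HasSum (fun n => j (t n ⊗ₜ[F] v n)) f) ∧
    (∀ v : ℕ → V,
        Tendsto (fun n => ‖v n‖) atTop (nhds 0) →
        HasSum (fun n => j (t n ⊗ₜ[F] v n)) f →
        ‖f‖ = ⨆ n, ‖v n‖) := by
  let e := equivFinsuppOfBasisLeft (N := V) t
  let g : (ℕ →₀ V) →+ W := (j ∘ₗ e.symm.toLinearMap).toAddMonoidHom
  have hg : ∀ a, ‖g a‖ = ⨆ i, ‖a i‖ := fun a => by
    simp only [g, LinearMap.toAddMonoidHom_coe, LinearMap.coe_comp, Function.comp_apply, hj, hNrm,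
      ← infNorm.eq_def, infNorm_eq_iSup_norm_equivFinsuppOfBasisLeft t hna hsmul, e,
      LinearEquiv.coe_coe, LinearEquiv.apply_symm_apply]
  have hgdense : DenseRange g := by
    simpa only [DenseRange, g, LinearMap.toAddMonoidHom_coe, LinearMap.coe_comp,
      LinearEquiv.coe_coe, EquivLike.range_comp] using hdense
  have hg_single : ∀ n w, g (Finsupp.single n w) = j (t n ⊗ₜ[F] w) := fun n w => by
    simp [g, e]
  simp only [← hg_single, ← Nat.cofinite_eq_atTop]
  obtain ⟨v, hv⟩ := exists_hasSum_single_of_denseRange hg hgdense f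
  exact ⟨⟨v, hv, fun v' hv' => eq_of_hasSum_single hg hv'.2 hv.2⟩,
    fun v' hv' hf => norm_eq_iSup_of_hasSum_single hg hv' hf⟩
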